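/- Fix k ∈ ℝ and let BS_k^{-1} : (max(1−e^k,0), 1) → (0,∞) denote the inverse of the strictly increasing function v ↦ BS(k,v) on (0,∞). Define G(x) := (BS_k^{-1}(x))². Then G is twice differentiable on (max(1−e^k,0), 1) and, writing w := G(x) = (BS_k^{-1}(x))², its second derivative is G''(x) = 2·(w²/4 + w − k²) / (w · φ(d₊(k, √w))²), where φ is the standard Gaussian density. -/

import Mathlib

open Real MeasureTheory Set Filter
open scoped ENNReal NNReal

/-- Standard Gaussian density. -/
noncomputable def gaussPdf (x : ℝ) : ℝ := Real.exp (-(x ^ 2) / 2) / Real.sqrt (2 * Real.pi)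

/-- Standard Gaussian cumulative distribution function. -/
noncomputable def gaussCdf (x : ℝ) : ℝ := ∫ t in Set.Iic x, gaussPdf t

noncomputable def dplus (k v : ℝ) : ℝ := -k / v + v / 2
noncomputable def dminus (k v : ℝ) : ℝ := -k / v - v / 2

/-- Black–Scholes call function for `v ∈ (0,∞)`. -/
noncomputable def BS (k v : ℝ) : ℝ :=
  gaussCdf (dplus k v) - Real.exp k * gaussCdf (dminus k v)

/-- Black–Scholes put function for `v ∈ (0,∞)`. -/
noncomputable def BSP (k v : ℝ) : ℝ :=
  Real.exp k * gaussCdf (-(dminus k v)) - gaussCdf (-(dplus k v))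

lemma gaussPdf_pos (x : ℝ) : 0 < gaussPdf x :=
  div_pos (Real.exp_pos _) (Real.sqrt_pos.2 (by positivity))

lemma continuous_gaussPdf : Continuous gaussPdf := by
  unfold gaussPdf; fun_prop

lemma integrable_gaussPdf : Integrable gaussPdf := by
  have h := integrable_exp_neg_mul_sq (b := (1:ℝ)/2) (by norm_num)
  have : Integrable (fun x : ℝ => Real.exp (-(x ^ 2) / 2)) := by
    convert h using 2 with x; ring_nf
  exact this.div_const _

lemma hasDerivAt_gaussCdf (x : ℝ) : HasDerivAt gaussCdf (gaussPdf x) x := by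
  have key : ∀ y : ℝ, gaussCdf y = gaussCdf 0 + ∫ t in (0:ℝ)..y, gaussPdf t := by
    intro y
    have := intervalIntegral.integral_Iic_sub_Iic (μ := volume) (f := gaussPdf) (a := 0) (b := y)
      integrable_gaussPdf.integrableOn integrable_gaussPdf.integrableOn
    simp only [gaussCdf]
    linarith
  have h : HasDerivAt (fun y => gaussCdf 0 + ∫ t in (0:ℝ)..y, gaussPdf t) (gaussPdf x) x := by
    refine ((intervalIntegral.integral_hasDerivAt_right
      (integrable_gaussPdf.intervalIntegrable)
      (continuous_gaussPdf.stronglyMeasurableAtFilter _ _)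
      continuous_gaussPdf.continuousAt).const_add _)
  exact h.congr_deriv rfl |>.congr_of_eventuallyEq (by filter_upwards with y using (key y))

lemma hasDerivAt_gaussPdf (x : ℝ) : HasDerivAt gaussPdf (-x * gaussPdf x) x := by
  have h : HasDerivAt (fun y : ℝ => Real.exp (-(y ^ 2) / 2)) (-x * Real.exp (-(x ^ 2) / 2)) x := by
    have h1 : HasDerivAt (fun y : ℝ => -(y ^ 2) / 2) (-x) x := by
      have := (hasDerivAt_pow 2 x).neg.div_const 2
      simpa using this.congr_deriv (by ring)
    exact ((Real.hasDerivAt_exp _).comp x h1).congr_deriv (by ring)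
  have h2 := h.div_const (Real.sqrt (2 * Real.pi))
  have : (fun y : ℝ => Real.exp (-(y ^ 2) / 2) / Real.sqrt (2 * Real.pi)) = gaussPdf := rfl
  rw [this] at h2
  refine h2.congr_deriv ?_
  unfold gaussPdf; ring

lemma gaussPdf_dminus (k v : ℝ) (hv : v ≠ 0) :
    Real.exp k * gaussPdf (dminus k v) = gaussPdf (dplus k v) := by
  unfold gaussPdf dminus dplus
  rw [mul_div_assoc', ← Real.exp_add]
  congr 2
  field_simp
  ring

lemma hasDerivAt_dplus (k v : ℝ) (hv : v ≠ 0) :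
    HasDerivAt (dplus k) (k / v ^ 2 + 1 / 2) v := by
  have h1 : HasDerivAt (fun v : ℝ => -k / v) (k / v ^ 2) v := by
    have := (hasDerivAt_inv hv).const_mul (-k)
    simpa [div_eq_mul_inv, neg_div] using this.congr_deriv (by field_simp)
  exact h1.add ((hasDerivAt_id v).div_const 2)

lemma hasDerivAt_dminus (k v : ℝ) (hv : v ≠ 0) :
    HasDerivAt (dminus k) (k / v ^ 2 - 1 / 2) v := by
  have h1 : HasDerivAt (fun v : ℝ => -k / v) (k / v ^ 2) v := by
    have := (hasDerivAt_inv hv).const_mul (-k)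
    simpa [div_eq_mul_inv, neg_div] using this.congr_deriv (by field_simp)
  exact h1.sub ((hasDerivAt_id v).div_const 2)

lemma hasDerivAt_BS (k v : ℝ) (hv : v ≠ 0) :
    HasDerivAt (BS k) (gaussPdf (dplus k v)) v := by
  have h1 : HasDerivAt (fun v => gaussCdf (dplus k v))
      (gaussPdf (dplus k v) * (k / v ^ 2 + 1 / 2)) v :=
    (hasDerivAt_gaussCdf _).comp v (hasDerivAt_dplus k v hv)
  have h2 : HasDerivAt (fun v => Real.exp k * gaussCdf (dminus k v))
      (Real.exp k * (gaussPdf (dminus k v) * (k / v ^ 2 - 1 / 2))) v :=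
    ((hasDerivAt_gaussCdf _).comp v (hasDerivAt_dminus k v hv)).const_mul _
  have h3 := h1.sub h2
  have key : gaussPdf (dplus k v) * (k / v ^ 2 + 1 / 2)
      - Real.exp k * (gaussPdf (dminus k v) * (k / v ^ 2 - 1 / 2))
      = gaussPdf (dplus k v) := by
    rw [← mul_assoc, gaussPdf_dminus k v hv]; ring
  rw [key] at h3
  exact h3

lemma BS_strictMonoOn (k : ℝ) : StrictMonoOn (BS k) (Set.Ioi 0) := by
  apply strictMonoOn_of_hasDerivWithinAt_pos (convex_Ioi 0)
  · exact fun x hx => ((hasDerivAt_BS k x (ne_of_gt hx)).continuousAt).continuousWithinAt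
  · intro x hx
    rw [interior_Ioi] at hx
    exact ((hasDerivAt_BS k x (ne_of_gt hx)).hasDerivWithinAt)
  · intro x hx
    rw [interior_Ioi] at hx
    exact gaussPdf_pos _


/-- Second derivative of `G(x) = (BS_k^{-1}(x))²`: if `g` is the (two-sided) inverse of
the strictly increasing map `v ↦ BS(k,v) : (0,∞) → (max (1−e^k) 0, 1)`, then
`G = g²` is twice differentiable on `(max (1−e^k) 0, 1)` and, with `w = g(x)²`,
`G''(x) = 2(w²/4 + w − k²)/(w·φ(d₊(k,√w))²)`. -/
theorem BS_inverse_sq_second_deriv (k : ℝ) (g : ℝ → ℝ)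
    (hg_left : ∀ v ∈ Set.Ioi (0 : ℝ), g (BS k v) = v)
    (hg_right : ∀ x ∈ Set.Ioo (max (1 - Real.exp k) 0) 1,
      g x ∈ Set.Ioi (0 : ℝ) ∧ BS k (g x) = x) :
    ∃ G' : ℝ → ℝ, ∀ x ∈ Set.Ioo (max (1 - Real.exp k) 0) 1,
      HasDerivAt (fun y => (g y) ^ 2) (G' x) x ∧
      HasDerivAt G'
        (2 * (((g x) ^ 2) ^ 2 / 4 + (g x) ^ 2 - k ^ 2)
          / ((g x) ^ 2 * (gaussPdf (dplus k (Real.sqrt ((g x) ^ 2)))) ^ 2)) x := by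
  set I := Set.Ioo (max (1 - Real.exp k) 0) 1 with hI
  have hIopen : IsOpen I := isOpen_Ioo
  have hmono := BS_strictMonoOn k
  -- continuity of g on I
  have hcont : ∀ x ∈ I, ContinuousAt g x := by
    intro x hx
    obtain ⟨hgx, hBS⟩ := hg_right x hx
    rw [ContinuousAt]
    apply tendsto_order.2
    constructor
    · intro b hb
      have hgx0 : (0:ℝ) < g x := hgx
      set b' := max b (g x / 2) with hb'
      have hb'0 : (0:ℝ) < b' := lt_max_of_lt_right (by linarith)
      have hb'lt : b' < g x := max_lt hb (by linarith)
      have hBSlt : BS k b' < x := by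
        rw [← hBS]; exact hmono hb'0 hgx hb'lt
      filter_upwards [hIopen.mem_nhds hx, eventually_gt_nhds hBSlt] with y hyI hy
      obtain ⟨hgy, hBSy⟩ := hg_right y hyI
      have : b' < g y := by
        by_contra h
        push_neg at h
        have : BS k (g y) ≤ BS k b' := (hmono.le_iff_le hgy hb'0).2 h
        rw [hBSy] at this
        linarith
      exact lt_of_le_of_lt (le_max_left _ _) this
    · intro b hb
      have hgx0 : (0:ℝ) < g x := hgx
      have hb0 : (0:ℝ) < b := lt_trans hgx0 hb
      have hBSlt : x < BS k b := by
        rw [← hBS]; exact hmono hgx hb0 hb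
      filter_upwards [hIopen.mem_nhds hx, eventually_lt_nhds hBSlt] with y hyI hy
      obtain ⟨hgy, hBSy⟩ := hg_right y hyI
      have : BS k (g y) < BS k b := by rw [hBSy]; exact hy
      exact (hmono.lt_iff_lt hgy hb0).1 this
  -- derivative of g
  have hg' : ∀ x ∈ I, HasDerivAt g (gaussPdf (dplus k (g x)))⁻¹ x := by
    intro x hx
    obtain ⟨hgx, hBS⟩ := hg_right x hx
    have hfg : ∀ᶠ y in nhds x, BS k (g y) = y :=
      Filter.eventually_of_mem (hIopen.mem_nhds hx) (fun y hy => (hg_right y hy).2)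
    exact HasDerivAt.of_local_left_inverse (hcont x hx)
      (hasDerivAt_BS k (g x) (ne_of_gt hgx)) (ne_of_gt (gaussPdf_pos _)) hfg
  refine ⟨fun y => 2 * g y / gaussPdf (dplus k (g y)), ?_⟩
  intro x hx
  obtain ⟨hgx, hBS⟩ := hg_right x hx
  have hgx0 : (0:ℝ) < g x := hgx
  have hv : g x ≠ 0 := ne_of_gt hgx0
  have hφpos := gaussPdf_pos (dplus k (g x))
  have hφ : gaussPdf (dplus k (g x)) ≠ 0 := ne_of_gt hφpos
  constructor
  · have h := (hg' x hx).pow 2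
    refine h.congr_deriv ?_
    push_cast
    field_simp
  · -- second derivative
    have hd : HasDerivAt (fun y => dplus k (g y))
        ((k / (g x) ^ 2 + 1 / 2) * (gaussPdf (dplus k (g x)))⁻¹) x :=
      (hasDerivAt_dplus k (g x) hv).comp x (hg' x hx)
    have hφ' : HasDerivAt (fun y => gaussPdf (dplus k (g y)))
        (-(dplus k (g x)) * gaussPdf (dplus k (g x)) *
          ((k / (g x) ^ 2 + 1 / 2) * (gaussPdf (dplus k (g x)))⁻¹)) x :=
      (hasDerivAt_gaussPdf _).comp x hd
    have hnum : HasDerivAt (fun y => 2 * g y) (2 * (gaussPdf (dplus k (g x)))⁻¹) x :=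
      (hg' x hx).const_mul 2
    have h := hnum.div hφ' hφ
    refine h.congr_deriv ?_
    rw [Real.sqrt_sq hgx0.le]
    have hDval : dplus k (g x) = -k / g x + g x / 2 := rfl
    set φ := gaussPdf (dplus k (g x)) with hφdef
    rw [hDval]
    field_simp
    ring
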